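/- arXiv:1009.2203 — 3 statements merged into one kernel-verified Lean document; each statement's English description precedes it below -/
import Mathlib

section
/- Given conjugal pairs Q=(a,b) and R=(c,d) with respect to a set X̃ containing them, with (a,b)≠(c,d), the pairs Q'=(a·c, b) and R'=(c, d·b) are conjugal pairs with respect to (X̃ \ {a,b,c,d}) ∪ {a·c, b, c, d·b}, and the subgroup generated by {a,b,c,d} equals the subgroup generated by {a·c, b, c, d·b}. -/
/-- Pauli operators on `n` qubits modulo phases, encoded symplectically:
each qubit carries an (X-part, Z-part) pair in `ZMod 2`. Multiplication is addition. -/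
abbrev Pauli (n : ℕ) : Type := Fin n → ZMod 2 × ZMod 2

namespace Pauli

/-- The symplectic form encoding commutation: `0` iff the operators commute. -/
def sform {n : ℕ} (a b : Pauli n) : ZMod 2 :=
  ∑ i, ((a i).1 * (b i).2 + (a i).2 * (b i).1)

/-- Two Pauli operators commute. -/
def PComm {n : ℕ} (a b : Pauli n) : Prop := sform a b = 0

/-- The weight of a Pauli operator: number of qubits on which it acts non-trivially. -/
def weight {n : ℕ} (a : Pauli n) : ℕ :=
  (Finset.univ.filter fun i => a i ≠ 0).card

/-- `(a,b)` is a conjugal pair in relation to the set `X`: `a` and `b` anti-commute,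
and each commutes with every member of `X` other than its partner. -/
def ConjugalPair {n : ℕ} (a b : Pauli n) (X : Set (Pauli n)) : Prop :=
  ¬ PComm a b ∧ (∀ x ∈ X, x ≠ b → PComm a x) ∧ (∀ x ∈ X, x ≠ a → PComm b x)

/-- `e` is an undetectable error with respect to `S` acting on `l`:
it commutes with all of `S` and anti-commutes with `l`. -/
def UndetError {n : ℕ} (S : Set (Pauli n)) (l e : Pauli n) : Prop :=
  (∀ s ∈ S, PComm e s) ∧ ¬ PComm e l

/-- `ω S l`: minimum weight of an undetectable error w.r.t. `S` acting on `l`. -/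
noncomputable def ω {n : ℕ} (S : Set (Pauli n)) (l : Pauli n) : ℕ :=
  sInf (weight '' {e | UndetError S l e})

/-- Single-qubit Pauli X on qubit `k`. -/
def Xk {n : ℕ} (k : Fin n) : Pauli n := fun i => if i = k then (1, 0) else 0

/-- Single-qubit Pauli Z on qubit `k`. -/
def Zk {n : ℕ} (k : Fin n) : Pauli n := fun i => if i = k then (0, 1) else 0

/-- `Pk k false = X_k`, `Pk k true = Z_k`. -/
def Pk {n : ℕ} (k : Fin n) (p : Bool) : Pauli n := if p then Zk k else Xk k

/-- A finite set of Pauli operators is independent if no member is a product of the others. -/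
def IndepSet {n : ℕ} (T : Finset (Pauli n)) : Prop :=
  ∀ t ∈ T, t ∉ AddSubgroup.closure ((T.erase t : Finset (Pauli n)) : Set (Pauli n))

/-- `O` is an unimprovable set with respect to `S`. -/
def Unimprovable {n : ℕ} (S : Set (Pauli n)) (O : Finset (Pauli n)) : Prop :=
  ∀ X ⊆ O, ∀ h : X.Nonempty, ω S (∑ x ∈ X, x) = X.inf' h (fun x => ω S x)

/-- The unimprovable set `O` extends to `Q` (with respect to `S`). -/
def ExtendsTo {n : ℕ} (S : Set (Pauli n)) (O Q : Finset (Pauli n)) : Prop :=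
  ∀ R ⊆ O ∪ Q, ∀ h : (R ∩ O).Nonempty,
    ω S (∑ x ∈ R, x) ≤ (R ∩ O).inf' h (fun x => ω S x)

end Pauli

section Aux

open Pauli

lemma z2_ne {x : ZMod 2} (h : x ≠ 0) : x = 1 := by revert h; revert x; decide

lemma sform_add_left {n : ℕ} (a b c : Pauli n) :
    sform (a + b) c = sform a c + sform b c := by
  unfold Pauli.sform
  rw [← Finset.sum_add_distrib]
  refine Finset.sum_congr rfl fun i _ => ?_
  simp only [Pi.add_apply, Prod.fst_add, Prod.snd_add]
  ring

lemma sform_symm {n : ℕ} (a b : Pauli n) : sform a b = sform b a := by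
  unfold Pauli.sform
  refine Finset.sum_congr rfl fun i _ => ?_
  ring

lemma sform_add_right {n : ℕ} (a b c : Pauli n) :
    sform a (b + c) = sform a b + sform a c := by
  rw [sform_symm, sform_add_left, sform_symm b, sform_symm c]

lemma sform_self {n : ℕ} (a : Pauli n) : sform a a = 0 := by
  unfold Pauli.sform
  refine Finset.sum_eq_zero fun i _ => ?_
  have : ∀ x y : ZMod 2, x * y + y * x = 0 := by decide
  exact this _ _

lemma pauli_add_self {n : ℕ} (a : Pauli n) : a + a = 0 := by
  funext i
  show a i + a i = 0
  have h2 : ∀ z : ZMod 2, z + z = 0 := by decide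
  exact Prod.ext (h2 _) (h2 _)

end Aux

/-- Combining conjugal pairs.  (Multiplication of Paulis modulo phase is `+`.) -/
theorem stmt1 {n : ℕ} (X : Set (Pauli n)) (a b c d : Pauli n)
    (hQ : Pauli.ConjugalPair a b X) (hR : Pauli.ConjugalPair c d X)
    (ha : a ∈ X) (hb : b ∈ X) (hc : c ∈ X) (hd : d ∈ X)
    (hne : (a, b) ≠ (c, d)) :
    Pauli.ConjugalPair (a + c) b ((X \ {a, b, c, d}) ∪ {a + c, b, c, d + b}) ∧
    Pauli.ConjugalPair c (d + b) ((X \ {a, b, c, d}) ∪ {a + c, b, c, d + b}) ∧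
    AddSubgroup.closure ({a, b, c, d} : Set (Pauli n)) =
      AddSubgroup.closure ({a + c, b, c, d + b} : Set (Pauli n)) := by
  simp only [Pauli.ConjugalPair, Pauli.PComm] at hQ hR ⊢
  obtain ⟨hQ1, hQ2, hQ3⟩ := hQ
  obtain ⟨hR1, hR2, hR3⟩ := hR
  have hab1 : Pauli.sform a b = 1 := z2_ne hQ1
  have hcd1 : Pauli.sform c d = 1 := z2_ne hR1
  have hac_ne : a ≠ c := by
    intro h
    by_cases hdb : d = b
    · exact hne (Prod.ext h hdb.symm)
    · have h0 := hQ2 d hd hdb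
      rw [← h, h0] at hcd1
      exact one_ne_zero hcd1.symm
  have hbd_ne : b ≠ d := by
    intro h
    by_cases hca : c = a
    · exact hne (Prod.ext hca.symm h)
    · have h0 := hQ3 c hc hca
      rw [sform_symm] at h0
      rw [← h, h0] at hcd1
      exact one_ne_zero hcd1.symm
  have hbc : Pauli.sform b c = 0 := by
    by_cases h : c = b
    · rw [h, sform_self]
    · exact hQ3 c hc (fun hca => hac_ne hca.symm)
  have hcb : Pauli.sform c b = 0 := by rw [sform_symm]; exact hbc
  have had : Pauli.sform a d = 0 := by
    by_cases h : d = a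
    · rw [h, sform_self]
    · exact hQ2 d hd (fun hdb => hbd_ne hdb.symm)
  have hda : Pauli.sform d a = 0 := by rw [sform_symm]; exact had
  have F3 : c ≠ b → Pauli.sform a c = 0 := fun h => hQ2 c hc h
  have F4 : d ≠ a → Pauli.sform b d = 0 := fun h => hQ3 d hd h
  have F5 : c = b → d = a := by
    intro h
    by_contra hda'
    have h0 := F4 hda'
    rw [← h] at h0
    rw [h0] at hcd1
    exact one_ne_zero hcd1.symm
  have F6 : d = a → c = b := by
    intro h
    by_contra hcb'
    have h0 := F3 hcb'
    rw [sform_symm] at h0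
    rw [← h] at h0
    rw [h0] at hcd1
    exact one_ne_zero hcd1.symm
  have hmem : ∀ x, x ∈ ((X \ {a, b, c, d}) ∪ {a + c, b, c, d + b} : Set (Pauli n)) →
      (x ∈ X ∧ x ≠ a ∧ x ≠ b ∧ x ≠ c ∧ x ≠ d) ∨
      x = a + c ∨ x = b ∨ x = c ∨ x = d + b := by
    intro x hx
    rcases hx with ⟨hxX, hxn⟩ | hx
    · simp only [Set.mem_insert_iff, Set.mem_singleton_iff, not_or] at hxn
      exact Or.inl ⟨hxX, hxn.1, hxn.2.1, hxn.2.2.1, hxn.2.2.2⟩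
    · simp only [Set.mem_insert_iff, Set.mem_singleton_iff] at hx
      exact Or.inr hx
  refine ⟨⟨?_, ?_, ?_⟩, ⟨?_, ?_, ?_⟩, ?_⟩
  · rw [sform_add_left, hab1, hcb]
    decide
  · intro x hx hxb
    rcases hmem x hx with ⟨hxX, _, hxb', _, hxd⟩ | h | h | h | h
    · rw [sform_add_left, hQ2 x hxX hxb', hR2 x hxX hxd, add_zero]
    · rw [h, sform_self]
    · exact absurd h hxb
    · have hcb' : c ≠ b := h ▸ hxb
      rw [h, sform_add_left, F3 hcb', sform_self, add_zero]
    · rw [h, sform_add_left, sform_add_right, sform_add_right, had, hab1, hcd1, hcb]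
      decide
  · intro x hx hxac
    rcases hmem x hx with ⟨hxX, hxa, _, _, _⟩ | h | h | h | h
    · exact hQ3 x hxX hxa
    · exact absurd h hxac
    · rw [h, sform_self]
    · rw [h]; exact hbc
    · by_cases hd' : d = a
      · exact absurd (h.trans (by rw [hd', F6 hd'])) hxac
      · rw [h, sform_add_right, F4 hd', sform_self, add_zero]
  · rw [sform_add_right, hcd1, hcb]
    decide
  · intro x hx hxdb
    rcases hmem x hx with ⟨hxX, _, _, _, hxd⟩ | h | h | h | h
    · exact hR2 x hxX hxd
    · by_cases hc' : c = b
      · exact absurd (h.trans (by rw [F5 hc', hc'])) hxdb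
      · rw [h, sform_add_right, sform_symm c a, F3 hc', sform_self, add_zero]
    · rw [h]; exact hcb
    · rw [h, sform_self]
    · exact absurd h hxdb
  · intro x hx hxc
    rcases hmem x hx with ⟨hxX, hxa, _, hxc', _⟩ | h | h | h | h
    · rw [sform_add_left, hR3 x hxX hxc', hQ3 x hxX hxa, add_zero]
    · rw [h, sform_add_left, sform_add_right, sform_add_right, hda,
        sform_symm d c, hcd1, sform_symm b a, hab1, hbc]
      decide
    · have hd' : d ≠ a := fun h' => (h ▸ hxc) (F6 h').symm
      rw [h, sform_add_left, sform_symm d b, F4 hd', sform_self, add_zero]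
    · exact absurd h hxc
    · rw [h, sform_self]
  · have key : ∀ u v : Pauli n, u + v + v = u := by
      intro u v; rw [add_assoc, pauli_add_self, add_zero]
    apply le_antisymm <;> rw [AddSubgroup.closure_le] <;> intro x hx <;>
      simp only [Set.mem_insert_iff, Set.mem_singleton_iff] at hx <;>
      rcases hx with h | h | h | h <;> rw [h]
    · have hm : (a + c) + c ∈ AddSubgroup.closure ({a + c, b, c, d + b} : Set (Pauli n)) :=
        add_mem (AddSubgroup.subset_closure (Or.inl rfl))
          (AddSubgroup.subset_closure (Or.inr (Or.inr (Or.inl rfl))))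
      rwa [key a c] at hm
    · exact AddSubgroup.subset_closure (by simp)
    · exact AddSubgroup.subset_closure (by simp)
    · have hm : (d + b) + b ∈ AddSubgroup.closure ({a + c, b, c, d + b} : Set (Pauli n)) :=
        add_mem (AddSubgroup.subset_closure (Or.inr (Or.inr (Or.inr rfl))))
          (AddSubgroup.subset_closure (Or.inr (Or.inl rfl)))
      rwa [key d b] at hm
    · exact add_mem (AddSubgroup.subset_closure (by simp))
        (AddSubgroup.subset_closure (by simp))
    · exact AddSubgroup.subset_closure (by simp)
    · exact AddSubgroup.subset_closure (by simp)
    · exact add_mem (AddSubgroup.subset_closure (by simp))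
        (AddSubgroup.subset_closure (by simp))
end

section
/- Given a sequence of Pauli operators O⃗ on n qubits, there exist a sequence S⃗ of Pauli operators and a set G̃ of Pauli operators such that: (1) all operators in S⃗ commute with each other and with all operators in G̃; (2) each operator in G̃ is a member of a conjugal pair in relation to {S⃗ᵢ} ∪ G̃; and (3) the group generated by {S⃗ᵢ} ∪ G̃ equals the group generated by the elements of O⃗. -/
/-!
Pauli operators modulo phases form the `ZMod 2`-vector space `Pauli n`, and commutation is the
vanishing of the alternating bilinear form `sform`. The theorem is a symplectic Gram–Schmidt
process with radical, and works for any alternating form over a field. Process `O` one vector at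
a time, keeping an isotropic list `S` and mutually orthogonal hyperbolic pairs (`B e f = 1`), all
orthogonal to `S`. A new vector is first made orthogonal to every pair by subtracting its
components along the pairs. If it is then orthogonal to `S` it joins `S`; otherwise it forms a new
pair with some `s ∈ S` it does not commute with, and the rest of `S` is repaired by multiples of
`s`. Each move preserves the span, and over `ZMod 2` spans are the generated subgroups.
-/

open Submodule

namespace Submodule

variable {R M : Type*} [Ring R] [AddCommGroup M] [Module R M]

lemma span_insert_le_span_insert_of_sub_mem {o o' : M} {X : Set M} (h : o - o' ∈ span R X) :
    span R (insert o X) ≤ span R (insert o' X) := by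
  rw [span_le, Set.insert_subset_iff]
  refine ⟨?_, subset_span.trans (span_mono (Set.subset_insert _ _))⟩
  rw [← sub_add_cancel o o']
  exact add_mem (span_mono (Set.subset_insert _ _) h) (subset_span (Set.mem_insert _ _))

lemma span_insert_eq_span_insert_of_sub_mem {o o' : M} {X : Set M} (h : o - o' ∈ span R X) :
    span R (insert o X) = span R (insert o' X) :=
  (span_insert_le_span_insert_of_sub_mem h).antisymm
    (span_insert_le_span_insert_of_sub_mem (by rw [← neg_sub]; exact neg_mem h))

lemma _root_.AddSubgroup.closure_eq_toAddSubgroup_span {n : ℕ} [Module (ZMod n) M] (X : Set M) :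
    AddSubgroup.closure X = (span (ZMod n) X).toAddSubgroup :=
  (AddSubgroup.closure_le _).mpr subset_span |>.antisymm
    ((span_le (p := AddSubgroup.toZModSubmodule n (AddSubgroup.closure X))).mpr
      AddSubgroup.subset_closure)

end Submodule

namespace LinearMap.BilinForm

def pairComps {V : Type*} (P : Finset (V × V)) : Set V := {x | ∃ p ∈ P, x = p.1 ∨ x = p.2}

lemma pairComps_insert {V : Type*} [DecidableEq V] (q : V × V) (P : Finset (V × V)) :
    pairComps (insert q P) = {q.1, q.2} ∪ pairComps P := by
  ext x
  simp [pairComps]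

variable {K V : Type*} [Field K] [AddCommGroup V] [Module K V] {B : LinearMap.BilinForm K V}

def IsOrthoPair (B : LinearMap.BilinForm K V) (v : V) (p : V × V) : Prop :=
  B v p.1 = 0 ∧ B v p.2 = 0

structure IsSymplecticSplitting (B : LinearMap.BilinForm K V) (S : List V) (P : Finset (V × V)) :
    Prop where
  isotropic : ∀ s ∈ S, ∀ t ∈ S, B s t = 0
  isOrthoPair : ∀ s ∈ S, ∀ p ∈ P, B.IsOrthoPair s p
  hyperbolic : ∀ p ∈ P, B p.1 p.2 = 1
  pairwise : (P : Set (V × V)).Pairwise fun p q => B.IsOrthoPair p.1 q ∧ B.IsOrthoPair p.2 q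

lemma exists_isOrthoPair_sub_mem_span (hB : B.IsAlt) {P : Finset (V × V)}
    (hyp : ∀ p ∈ P, B p.1 p.2 = 1)
    (hP : (P : Set (V × V)).Pairwise fun p q => B.IsOrthoPair p.1 q ∧ B.IsOrthoPair p.2 q)
    (o : V) : ∃ o', o - o' ∈ span K (pairComps P) ∧ ∀ p ∈ P, B.IsOrthoPair o' p := by
  classical
  induction P using Finset.induction_on with
  | empty => exact ⟨o, by simp, by simp⟩
  | insert q P hq ih =>
    rw [Finset.coe_insert, Set.pairwise_insert] at hP
    obtain ⟨o', ho', horth⟩ := ih (fun p hp => hyp p (Finset.mem_insert_of_mem hp)) hP.1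
    have hqq : B q.1 q.2 = 1 := hyp q (Finset.mem_insert_self q P)
    have hqq' : B q.2 q.1 = -1 := by rw [← hB.neg_eq, hqq]
    -- Subtracting the components of `o'` along the hyperbolic pair `q`; the other pairs are
    -- orthogonal to `q`, so `o'` stays orthogonal to them.
    refine ⟨o' - B o' q.2 • q.1 + B o' q.1 • q.2, ?_, ?_⟩
    · have hsub : o - (o' - B o' q.2 • q.1 + B o' q.1 • q.2) =
          (o - o') + (B o' q.2 • q.1 - B o' q.1 • q.2) := by abel
      rw [hsub, pairComps_insert, span_union]
      exact add_mem (mem_sup_right ho') (mem_sup_left (sub_mem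
        (smul_mem _ _ (subset_span (by simp))) (smul_mem _ _ (subset_span (by simp)))))
    · intro p hp
      rcases Finset.mem_insert.mp hp with rfl | hp
      · constructor <;> simp [hqq, hqq', hB.self_eq_zero]
      · obtain ⟨⟨h11, h12⟩, ⟨h21, h22⟩⟩ := (hP.2 p hp (by rintro rfl; exact hq hp)).1
        obtain ⟨h1, h2⟩ := horth p hp
        constructor <;> simp [h11, h12, h21, h22, h1, h2]

namespace IsSymplecticSplitting

variable {S : List V} {P : Finset (V × V)}

lemma cons (h : B.IsSymplecticSplitting S P) (hB : B.IsAlt) {o : V} (hS : ∀ s ∈ S, B s o = 0)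
    (hP : ∀ p ∈ P, B.IsOrthoPair o p) : B.IsSymplecticSplitting (o :: S) P where
  isotropic := by
    simp only [List.mem_cons, forall_eq_or_imp, hB.self_eq_zero, true_and]
    exact ⟨fun t ht => hB.eq_iff.mp (hS t ht),
      fun s hs => ⟨hS s hs, h.isotropic s hs⟩⟩
  isOrthoPair := by
    simp only [List.mem_cons, forall_eq_or_imp]
    exact ⟨hP, h.isOrthoPair⟩
  hyperbolic := h.hyperbolic
  pairwise := h.pairwise

/-- `t - (B t o / B s o) • s` is the correction of `t` by a multiple of `s` that makes it orthogonal
to `o`; it sends `s` itself to `0`. -/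
lemma insert_pair [DecidableEq V] (h : B.IsSymplecticSplitting S P) (hB : B.IsAlt) {s o : V}
    (hs : s ∈ S) (hso : B s o ≠ 0) (hP : ∀ p ∈ P, B.IsOrthoPair o p) :
    B.IsSymplecticSplitting (S.map fun t => t - (B t o / B s o) • s)
      (insert (s, (B s o)⁻¹ • o) P) where
  isotropic := by
    simp only [List.mem_map]
    rintro _ ⟨t, ht, rfl⟩ _ ⟨t', ht', rfl⟩
    simp [h.isotropic _ ht _ ht', h.isotropic _ ht _ hs, h.isotropic _ hs _ ht',
      h.isotropic _ hs _ hs]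
  isOrthoPair := by
    simp only [List.mem_map, Finset.mem_insert]
    rintro _ ⟨t, ht, rfl⟩ p (rfl | hp)
    · constructor
      · simp [h.isotropic _ ht _ hs, hB.self_eq_zero]
      · simp only [map_sub, map_smul, LinearMap.sub_apply, LinearMap.smul_apply, smul_eq_mul]
        field_simp
        ring
    · obtain ⟨ht1, ht2⟩ := h.isOrthoPair t ht p hp
      obtain ⟨hs1, hs2⟩ := h.isOrthoPair s hs p hp
      constructor <;> simp [ht1, ht2, hs1, hs2]
  hyperbolic := by
    simp only [Finset.mem_insert, forall_eq_or_imp]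
    refine ⟨?_, h.hyperbolic⟩
    simp [hso]
  pairwise := by
    rw [Finset.coe_insert, Set.pairwise_insert]
    refine ⟨h.pairwise, fun q hq _ => ⟨⟨h.isOrthoPair s hs q hq, ?_⟩, ?_⟩⟩
    · obtain ⟨h1, h2⟩ := hP q hq
      constructor <;> simp [h1, h2]
    · obtain ⟨hs1, hs2⟩ := h.isOrthoPair s hs q hq
      obtain ⟨ho1, ho2⟩ := hP q hq
      refine ⟨⟨hB.eq_iff.mp hs1, ?_⟩, ⟨hB.eq_iff.mp hs2, ?_⟩⟩
      · simp [hB.eq_iff.mp ho1]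
      · simp [hB.eq_iff.mp ho2]

lemma span_insert_pair [DecidableEq V] {s o : V} (hs : s ∈ S) (hso : B s o ≠ 0) :
    span K ({x | x ∈ S.map fun t => t - (B t o / B s o) • s} ∪
        pairComps (insert (s, (B s o)⁻¹ • o) P)) =
      span K (insert o ({x | x ∈ S} ∪ pairComps P)) := by
  set Y := insert o ({x | x ∈ S} ∪ pairComps P)
  set X := {x | x ∈ S.map fun t => t - (B t o / B s o) • s} ∪
    pairComps (insert (s, (B s o)⁻¹ • o) P)
  have hsY : s ∈ span K Y := subset_span (by simp [Y, hs])
  have hsX : s ∈ span K X := subset_span (Or.inr (by simp [pairComps_insert]))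
  apply le_antisymm
  · rw [span_le]
    rintro x (hx | hx)
    · obtain ⟨t, ht, rfl⟩ := List.mem_map.mp hx
      exact sub_mem (subset_span (by simp [Y, ht])) (smul_mem _ _ hsY)
    · rw [pairComps_insert] at hx
      rcases hx with (rfl | rfl) | hx
      · exact hsY
      · exact smul_mem _ _ (subset_span (Set.mem_insert _ _))
      · exact subset_span (by simp [Y, hx])
  · rw [span_le, Set.insert_subset_iff]
    refine ⟨?_, ?_⟩
    · have : (B s o)⁻¹ • o ∈ span K X := subset_span (Or.inr (by simp [pairComps_insert]))
      simpa [smul_smul, hso] using smul_mem _ (B s o) this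
    · rintro x (hx | hx)
      · have : x - (B x o / B s o) • s ∈ span K X :=
          subset_span (Or.inl (List.mem_map.mpr ⟨x, hx, rfl⟩))
        simpa using add_mem this (smul_mem _ (B x o / B s o) hsX)
      · exact subset_span (Or.inr (by rw [pairComps_insert]; exact Or.inr hx))

lemma apply_eq_zero_of_ne (h : B.IsSymplecticSplitting S P) (hB : B.IsAlt) {p : V × V}
    (hp : p ∈ P) {x : V} (hx : x ∈ {x | x ∈ S} ∪ pairComps P) :
    (x ≠ p.2 → B p.1 x = 0) ∧ (x ≠ p.1 → B p.2 x = 0) := by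
  rcases hx with hx | ⟨q, hq, hxq⟩
  · obtain ⟨h1, h2⟩ := h.isOrthoPair x hx p hp
    exact ⟨fun _ => hB.eq_iff.mp h1, fun _ => hB.eq_iff.mp h2⟩
  by_cases hpq : p = q
  · subst hpq
    rcases hxq with rfl | rfl
    · exact ⟨fun _ => hB.self_eq_zero _, fun hne => absurd rfl hne⟩
    · exact ⟨fun hne => absurd rfl hne, fun _ => hB.self_eq_zero _⟩
  · obtain ⟨⟨h11, h12⟩, ⟨h21, h22⟩⟩ := h.pairwise hp hq hpq
    rcases hxq with rfl | rfl
    · exact ⟨fun _ => h11, fun _ => h21⟩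
    · exact ⟨fun _ => h12, fun _ => h22⟩

lemma exists_extend (h : B.IsSymplecticSplitting S P) (hB : B.IsAlt) (o : V) :
    ∃ (S' : List V) (P' : Finset (V × V)), B.IsSymplecticSplitting S' P' ∧
      span K ({x | x ∈ S'} ∪ pairComps P') =
        span K (insert o ({x | x ∈ S} ∪ pairComps P)) := by
  classical
  obtain ⟨o', ho', hP⟩ := exists_isOrthoPair_sub_mem_span hB h.hyperbolic h.pairwise o
  rw [span_insert_eq_span_insert_of_sub_mem
    (span_mono Set.subset_union_right ho' : o - o' ∈ span K ({x | x ∈ S} ∪ pairComps P))]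
  by_cases hS : ∀ s ∈ S, B s o' = 0
  · refine ⟨o' :: S, P, h.cons hB hS hP, ?_⟩
    congr 1
    ext x
    simp [or_assoc]
  · push Not at hS
    obtain ⟨s, hs, hso⟩ := hS
    exact ⟨_, _, h.insert_pair hB hs hso hP, span_insert_pair hs hso⟩

end IsSymplecticSplitting

lemma exists_isSymplecticSplitting (hB : B.IsAlt) (O : List V) :
    ∃ (S : List V) (P : Finset (V × V)), B.IsSymplecticSplitting S P ∧
      span K ({x | x ∈ S} ∪ pairComps P) = span K {x | x ∈ O} := by
  induction O with
  | nil => exact ⟨[], ∅, ⟨by simp, by simp, by simp, by simp⟩, by simp [pairComps]⟩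
  | cons o O ih =>
    obtain ⟨S, P, h, hspan⟩ := ih
    obtain ⟨S', P', h', hspan'⟩ := h.exists_extend hB o
    refine ⟨S', P', h', ?_⟩
    rw [hspan', span_insert, hspan, ← span_insert]
    congr 1
    ext x
    simp

end LinearMap.BilinForm

namespace Pauli

variable {n : ℕ}

def sformBilin : LinearMap.BilinForm (ZMod 2) (Pauli n) :=
  LinearMap.mk₂ (ZMod 2) sform
    (fun a a' b => by simp only [sform, ← Finset.sum_add_distrib]; congr 1; ext i; simp; ring)
    (fun c a b => by simp only [sform, smul_eq_mul, Finset.mul_sum]; congr 1; ext i; simp; ring)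
    (fun a b b' => by simp only [sform, ← Finset.sum_add_distrib]; congr 1; ext i; simp; ring)
    (fun c a b => by simp only [sform, smul_eq_mul, Finset.mul_sum]; congr 1; ext i; simp; ring)

lemma pComm_iff_sformBilin {a b : Pauli n} : PComm a b ↔ sformBilin a b = 0 := Iff.rfl

lemma isAlt_sformBilin : (sformBilin : LinearMap.BilinForm (ZMod 2) (Pauli n)).IsAlt := by
  intro a
  change sform a a = 0
  refine Finset.sum_eq_zero fun i _ => ?_
  have : ∀ x y : ZMod 2, x * y + y * x = 0 := by decide
  exact this _ _

lemma PComm.symm {a b : Pauli n} (h : PComm a b) : PComm b a :=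
  isAlt_sformBilin.eq_iff.mp h

lemma ConjugalPair.symm {a b : Pauli n} {X : Set (Pauli n)} (h : ConjugalPair a b X) :
    ConjugalPair b a X :=
  ⟨fun hba => h.1 hba.symm, h.2.2, h.2.1⟩

open LinearMap.BilinForm in
lemma conjugalPair_of_mem {S : List (Pauli n)} {P : Finset (Pauli n × Pauli n)}
    (h : sformBilin.IsSymplecticSplitting S P) {p : Pauli n × Pauli n} (hp : p ∈ P) :
    ConjugalPair p.1 p.2 ({x | x ∈ S} ∪ pairComps P) :=
  ⟨by rw [pComm_iff_sformBilin, h.hyperbolic p hp]; exact one_ne_zero,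
    fun _ hx => (h.apply_eq_zero_of_ne isAlt_sformBilin hp hx).1,
    fun _ hx => (h.apply_eq_zero_of_ne isAlt_sformBilin hp hx).2⟩

end Pauli

/-- From any sequence of Pauli operators one can construct stabilizers `S` and
gauge operators `G` with the stated commutation, conjugal-pair and generation properties. -/
theorem stmt16 {n : ℕ} (O : List (Pauli n)) :
    ∃ (S : List (Pauli n)) (G : Set (Pauli n)),
      (∀ s ∈ S, ∀ s' ∈ S, Pauli.PComm s s') ∧
      (∀ s ∈ S, ∀ g ∈ G, Pauli.PComm s g) ∧
      (∀ g ∈ G, ∃ g' ∈ G, Pauli.ConjugalPair g g' ({x | x ∈ S} ∪ G)) ∧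
      AddSubgroup.closure ({x | x ∈ S} ∪ G) = AddSubgroup.closure {x | x ∈ O} := by
  obtain ⟨S, P, h, hspan⟩ :=
    LinearMap.BilinForm.exists_isSymplecticSplitting Pauli.isAlt_sformBilin O
  refine ⟨S, LinearMap.BilinForm.pairComps P, h.isotropic, ?_, ?_, ?_⟩
  · rintro s hs g ⟨p, hp, rfl | rfl⟩
    exacts [(h.isOrthoPair s hs p hp).1, (h.isOrthoPair s hs p hp).2]
  · rintro g ⟨p, hp, rfl | rfl⟩
    exacts [⟨p.2, ⟨p, hp, Or.inr rfl⟩, Pauli.conjugalPair_of_mem h hp⟩,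
      ⟨p.1, ⟨p, hp, Or.inl rfl⟩, (Pauli.conjugalPair_of_mem h hp).symm⟩]
  · rw [AddSubgroup.closure_eq_toAddSubgroup_span (n := 2),
      AddSubgroup.closure_eq_toAddSubgroup_span (n := 2), hspan]
end

section
/- Given a sequence R⃗ of pairwise commuting Pauli operators on N qubits, there exist a sequence S⃗ of n independent pairwise commuting Pauli operators generating the same group as R⃗, a sequence k⃗ of n distinct integers in {1,…,N}, and a map p:{1,…,n}→{0,1} such that for each i, S⃗ᵢ is the unique operator in S⃗ that anti-commutes with P_{k⃗ᵢ}^{[p(i)]}, where P_k^{[0]} := X_k and P_k^{[1]} := Z_k. -/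
/-!
Gaussian elimination, one generator at a time. We maintain generators `S_j` with distinct
pivot qubits `k_i` and pivot types `p_i` such that `S_j` anticommutes with `P_{k_i}^{[p_i]}` iff
`j = i`; independence and the uniqueness clause are immediate from this. To adjoin a new `r`,
first add to it those `S_i` that clear its pivot components. If the result `r'` is nonzero it
has support off the pivot qubits: on `k_i` its pivot component vanishes, and its other component
equals the symplectic product of `r'` with `S_i`, which is `0` since everything commutes. A
fresh pivot of `r'` is then cleared from the old generators by adding `r'` to them.
-/

namespace AddSubgroup

open Set

lemma closure_insert_add_eq {G : Type*} [AddGroup G] {s : Set G} (x : G) {y : G}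
    (hy : y ∈ closure s) : closure (insert (x + y) s) = closure (insert x s) := by
  have hs : ∀ x, closure s ≤ closure (insert x s) := fun x => closure_mono (subset_insert x s)
  apply le_antisymm <;>
    refine (closure_le _).2 (insert_subset ?_ ((subset_insert _ s).trans subset_closure))
  · exact add_mem (subset_closure (mem_insert x s)) (hs x hy)
  · simpa using sub_mem (subset_closure (mem_insert (x + y) s)) (hs (x + y) hy)

lemma closure_insert_congr {G : Type*} [AddGroup G] (x : G) {s t : Set G}
    (h : closure s = closure t) : closure (insert x s) = closure (insert x t) := by
  rw [insert_eq, insert_eq, closure_union, closure_union, h]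

lemma zmod_smul_mem {M : Type*} [AddCommGroup M] {n : ℕ} [Module (ZMod n) M]
    {H : AddSubgroup M} (c : ZMod n) {x : M} (hx : x ∈ H) : c • x ∈ H :=
  (toZModSubmodule n H).smul_mem c hx

end AddSubgroup

namespace Pauli

open Set

variable {N : ℕ}

lemma sform_add_left (a b c : Pauli N) : sform (a + b) c = sform a c + sform b c := by
  simp only [sform, ← Finset.sum_add_distrib, Pi.add_apply, Prod.fst_add, Prod.snd_add]
  congr 1; ext i; ring

lemma sform_smul_left (c : ZMod 2) (a b : Pauli N) : sform (c • a) b = c * sform a b := by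
  simp only [sform, Finset.mul_sum, Pi.smul_apply, Prod.smul_fst, Prod.smul_snd, smul_eq_mul]
  congr 1; ext i; ring

lemma sform_comm (a b : Pauli N) : sform a b = sform b a := by
  simp only [sform]; congr 1; ext i; ring

lemma sform_sum_left {ι : Type*} (s : Finset ι) (f : ι → Pauli N) (b : Pauli N) :
    sform (∑ i ∈ s, f i) b = ∑ i ∈ s, sform (f i) b :=
  map_sum (AddMonoidHom.mk' (sform · b) (sform_add_left · · b)) f s

lemma sform_Pk (a : Pauli N) (k : Fin N) (b : Bool) :
    sform a (Pk k b) = if b then (a k).1 else (a k).2 := by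
  cases b <;> simp [sform, Pk, Xk, Zk, apply_ite]

lemma sform_eq_zero_of_mem_closure {T : Set (Pauli N)} {v a : Pauli N}
    (h : ∀ t ∈ T, sform t v = 0) (ha : a ∈ AddSubgroup.closure T) : sform a v = 0 := by
  induction ha using AddSubgroup.closure_induction with
  | mem t ht => exact h t ht
  | zero => simp [sform]
  | add x y _ _ hx hy => rw [sform_add_left, hx, hy, add_zero]
  | neg x _ hx => rw [← neg_one_smul (ZMod 2) x, sform_smul_left, hx, mul_zero]

lemma sform_eq_zero_of_mem_closure_of_pairwise {T : Set (Pauli N)}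
    (h : ∀ a ∈ T, ∀ b ∈ T, sform a b = 0) {a b : Pauli N}
    (ha : a ∈ AddSubgroup.closure T) (hb : b ∈ AddSubgroup.closure T) : sform a b = 0 := by
  refine sform_eq_zero_of_mem_closure (fun t ht => ?_) ha
  rw [sform_comm]
  exact sform_eq_zero_of_mem_closure (fun u hu => h u hu t ht) hb

lemma apply_eq_zero_of_sform_Pk_eq_zero {a : Pauli N} {k : Fin N}
    (h : ∀ b, sform a (Pk k b) = 0) : a k = 0 := by
  have hZ := h true
  have hX := h false
  simp only [sform_Pk, if_true, Bool.false_eq_true, if_false] at hZ hX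
  exact Prod.ext hZ hX

lemma exists_sform_Pk_eq_one {a : Pauli N} {k : Fin N} (h : a k ≠ 0) :
    ∃ b, sform a (Pk k b) = 1 := by
  by_contra! hne
  have h01 : ∀ x : ZMod 2, x ≠ 1 → x = 0 := by decide
  exact h (apply_eq_zero_of_sform_Pk_eq_zero fun b => h01 _ (hne b))

/-- Generators in reduced echelon form: `gen j` anticommutes with the pivot
`P_{qubit i}^{[isZ i]}` exactly when `j = i`. -/
structure PivotBasis (N n : ℕ) where
  gen : Fin n → Pauli N
  qubit : Fin n → Fin N
  isZ : Fin n → Bool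
  qubit_injective : Function.Injective qubit
  sform_gen_Pk : ∀ i j, sform (gen j) (Pk (qubit i) (isZ i)) = if j = i then 1 else 0

namespace PivotBasis

variable {n : ℕ} (B : PivotBasis N n)

lemma pcomm_gen_Pk_iff (i j : Fin n) :
    PComm (B.gen j) (Pk (B.qubit i) (B.isZ i)) ↔ j ≠ i := by
  rw [PComm, B.sform_gen_Pk]
  split_ifs with h <;> simp [h]

lemma gen_notMem_closure {i : Fin n} {T : Set (Pauli N)} (hT : T ⊆ B.gen '' {i}ᶜ) :
    B.gen i ∉ AddSubgroup.closure T := fun hmem => by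
  have h := sform_eq_zero_of_mem_closure (v := Pk (B.qubit i) (B.isZ i)) ?_ hmem
  · simp [B.sform_gen_Pk] at h
  · intro t ht
    obtain ⟨j, hji, rfl⟩ := hT ht
    simpa [B.sform_gen_Pk] using hji

def reduce (r : Pauli N) : Pauli N :=
  r + ∑ i, sform r (Pk (B.qubit i) (B.isZ i)) • B.gen i

lemma sform_reduce_Pk (r : Pauli N) (i : Fin n) :
    sform (B.reduce r) (Pk (B.qubit i) (B.isZ i)) = 0 := by
  simp only [reduce, sform_add_left, sform_sum_left, sform_smul_left, B.sform_gen_Pk,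
    mul_ite, mul_one, mul_zero, Finset.sum_ite_eq', Finset.mem_univ, if_true]
  exact CharTwo.add_self_eq_zero _

lemma reduce_sub_mem_closure (r : Pauli N) :
    B.reduce r - r ∈ AddSubgroup.closure (range B.gen) := by
  rw [reduce, add_sub_cancel_left]
  exact sum_mem fun i _ =>
    AddSubgroup.zmod_smul_mem _ (AddSubgroup.subset_closure (mem_range_self i))

/-- On the qubit `qubit i`, an `a` with vanishing pivot components pairs with `gen i` only
through its other component; so `sform a (gen i)` is that component. -/
lemma eq_zero_of_support_subset {a : Pauli N}
    (hPk : ∀ i, sform a (Pk (B.qubit i) (B.isZ i)) = 0) (hgen : ∀ i, sform a (B.gen i) = 0)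
    (hsupp : ∀ q ∉ range B.qubit, a q = 0) : a = 0 := by
  have hlocal : ∀ (u v : ZMod 2 × ZMod 2) (b : Bool), (if b then u.1 else u.2) = 0 →
      u.1 * v.2 + u.2 * v.1 = (if !b then u.1 else u.2) * (if b then v.1 else v.2) := by
    decide
  funext q
  by_cases hq : q ∈ range B.qubit
  · obtain ⟨i, rfl⟩ := hq
    refine apply_eq_zero_of_sform_Pk_eq_zero fun b => ?_
    rcases Bool.eq_or_eq_not b (B.isZ i) with rfl | rfl
    · exact hPk i
    calc sform a (Pk (B.qubit i) !B.isZ i)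
        = ∑ m, sform a (Pk (B.qubit m) !B.isZ m) *
            sform (B.gen i) (Pk (B.qubit m) (B.isZ m)) := by
          simp [B.sform_gen_Pk, eq_comm (a := i)]
      _ = sform a (B.gen i) := by
          refine Fintype.sum_of_injective _ B.qubit_injective _ _
            (fun q hq => by simp [hsupp q hq]) fun m => ?_
          have hm := hPk m
          simp only [sform_Pk] at hm ⊢
          exact (hlocal _ _ _ hm).symm
      _ = 0 := hgen i
  · exact hsupp q hq

lemma exists_fresh_pivot {a : Pauli N} (ha : a ≠ 0)
    (hPk : ∀ i, sform a (Pk (B.qubit i) (B.isZ i)) = 0) (hgen : ∀ i, sform a (B.gen i) = 0) :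
    ∃ q ∉ range B.qubit, ∃ b, sform a (Pk q b) = 1 := by
  by_contra! h
  refine ha (B.eq_zero_of_support_subset hPk hgen fun q hq => ?_)
  by_contra hq0
  obtain ⟨b, hb⟩ := exists_sform_Pk_eq_one hq0
  exact h q hq b hb

def cons {a : Pauli N} {q : Fin N} {b : Bool} (hq : q ∉ range B.qubit)
    (hab : sform a (Pk q b) = 1) (hPk : ∀ i, sform a (Pk (B.qubit i) (B.isZ i)) = 0) :
    PivotBasis N (n + 1) where
  gen := Fin.cons a fun i => B.gen i + sform (B.gen i) (Pk q b) • a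
  qubit := Fin.cons q B.qubit
  isZ := Fin.cons b B.isZ
  qubit_injective := Fin.cons_injective_iff.2 ⟨hq, B.qubit_injective⟩
  sform_gen_Pk i j := by
    cases i using Fin.cases <;> cases j using Fin.cases <;>
      simp [sform_add_left, sform_smul_left, hab, hPk, B.sform_gen_Pk, CharTwo.add_self_eq_zero,
        (Fin.succ_ne_zero _).symm]

lemma closure_range_cons_gen {a : Pauli N} {q : Fin N} {b : Bool} (hq : q ∉ range B.qubit)
    (hab : sform a (Pk q b) = 1) (hPk : ∀ i, sform a (Pk (B.qubit i) (B.isZ i)) = 0) :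
    AddSubgroup.closure (range (B.cons hq hab hPk).gen) =
      AddSubgroup.closure (insert a (range B.gen)) := by
  have ha : a ∈ AddSubgroup.closure (insert a (range B.gen)) :=
    AddSubgroup.subset_closure (mem_insert a _)
  have hgen : ∀ i, B.gen i ∈ AddSubgroup.closure (insert a (range B.gen)) :=
    fun i => AddSubgroup.subset_closure (mem_insert_of_mem a (mem_range_self i))
  have ha' : a ∈ AddSubgroup.closure (range (B.cons hq hab hPk).gen) :=
    AddSubgroup.subset_closure ⟨0, rfl⟩
  apply le_antisymm <;> rw [AddSubgroup.closure_le]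
  · rintro _ ⟨i, rfl⟩
    cases i using Fin.cases
    · exact ha
    · exact add_mem (hgen _) (AddSubgroup.zmod_smul_mem _ ha)
  · refine insert_subset ha' ?_
    rintro _ ⟨i, rfl⟩
    have hi : B.gen i + sform (B.gen i) (Pk q b) • a ∈
        AddSubgroup.closure (range (B.cons hq hab hPk).gen) :=
      AddSubgroup.subset_closure ⟨i.succ, rfl⟩
    simpa using sub_mem hi (AddSubgroup.zmod_smul_mem (sform (B.gen i) (Pk q b)) ha')

lemma exists_closure_eq_insert {r : Pauli N}
    (hiso : ∀ x ∈ AddSubgroup.closure (insert r (range B.gen)),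
      ∀ y ∈ AddSubgroup.closure (insert r (range B.gen)), sform x y = 0) :
    ∃ m, ∃ B' : PivotBasis N m,
      AddSubgroup.closure (range B'.gen) = AddSubgroup.closure (insert r (range B.gen)) := by
  have hred : AddSubgroup.closure (insert (B.reduce r) (range B.gen)) =
      AddSubgroup.closure (insert r (range B.gen)) := by
    simpa using AddSubgroup.closure_insert_add_eq r (B.reduce_sub_mem_closure r)
  by_cases h0 : B.reduce r = 0
  · exact ⟨n, B, by rw [← hred, h0, AddSubgroup.closure_insert_zero]⟩
  have hgen : ∀ i, sform (B.reduce r) (B.gen i) = 0 := fun i =>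
    hiso _ (hred ▸ AddSubgroup.subset_closure (mem_insert _ _)) _
      (AddSubgroup.subset_closure (mem_insert_of_mem r (mem_range_self i)))
  obtain ⟨q, hq, b, hb⟩ := B.exists_fresh_pivot h0 (B.sform_reduce_Pk r) hgen
  exact ⟨n + 1, B.cons hq hb (B.sform_reduce_Pk r), by rw [closure_range_cons_gen, hred]⟩

end PivotBasis

lemma exists_pivotBasis (R : List (Pauli N)) (hR : ∀ r ∈ R, ∀ r' ∈ R, sform r r' = 0) :
    ∃ n, ∃ B : PivotBasis N n,
      AddSubgroup.closure (range B.gen) = AddSubgroup.closure {x | x ∈ R} := by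
  induction R with
  | nil =>
    refine ⟨0, ⟨Fin.elim0, Fin.elim0, Fin.elim0, fun i => i.elim0, fun i => i.elim0⟩, ?_⟩
    simp
  | cons r R ih =>
    obtain ⟨n, B, hB⟩ := ih fun a ha b hb => hR a (.tail r ha) b (.tail r hb)
    have hcons : AddSubgroup.closure (insert r (range B.gen)) =
        AddSubgroup.closure {x | x ∈ r :: R} := by
      rw [AddSubgroup.closure_insert_congr r hB]
      congr 1
      ext; simp
    rw [← hcons]
    refine B.exists_closure_eq_insert ?_
    rw [hcons]
    exact fun x hx y hy => sform_eq_zero_of_mem_closure_of_pairwise hR hx hy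

end Pauli

/-- Gaussian elimination for Pauli operators: from any commuting sequence `R`
one obtains an independent commuting sequence `S` generating the same group, together with
distinct qubit indices `k` and a map `p` to `{X(=false), Z(=true)}` such that `S i` is the unique
member of `S` anti-commuting with `P_{k i}^{[p i]}`. -/
theorem stmt17 {N : ℕ} (R : List (Pauli N))
    (hR : ∀ r ∈ R, ∀ r' ∈ R, Pauli.PComm r r') :
    ∃ (S : List (Pauli N)) (k : List (Fin N)) (p : ℕ → Bool),
      S.length = k.length ∧ k.Nodup ∧
      (∀ s ∈ S, ∀ s' ∈ S, Pauli.PComm s s') ∧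
      (∀ i (hi : i < S.length),
        S.get ⟨i, hi⟩ ∉ AddSubgroup.closure
          {x | ∃ j, ∃ hj : j < S.length, j ≠ i ∧ S.get ⟨j, hj⟩ = x}) ∧
      AddSubgroup.closure {x | x ∈ S} = AddSubgroup.closure {x | x ∈ R} ∧
      (∀ i (hi : i < S.length) (hik : i < k.length),
        ¬ Pauli.PComm (S.get ⟨i, hi⟩) (Pauli.Pk (k.get ⟨i, hik⟩) (p i)) ∧
        ∀ j (hj : j < S.length),
          ¬ Pauli.PComm (S.get ⟨j, hj⟩) (Pauli.Pk (k.get ⟨i, hik⟩) (p i)) → j = i) := by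
  obtain ⟨n, B, hB⟩ := Pauli.exists_pivotBasis R hR
  have hS : {x | x ∈ List.ofFn B.gen} = Set.range B.gen := by ext; simp [List.mem_ofFn]
  have hSR : ∀ s ∈ List.ofFn B.gen, s ∈ AddSubgroup.closure {x | x ∈ R} := fun s hs =>
    hB ▸ AddSubgroup.subset_closure (List.mem_ofFn.1 hs)
  refine ⟨List.ofFn B.gen, List.ofFn B.qubit,
    fun i => if h : i < n then B.isZ ⟨i, h⟩ else false, by simp,
    List.nodup_ofFn.2 B.qubit_injective,
    fun s hs s' hs' => Pauli.sform_eq_zero_of_mem_closure_of_pairwise hR (hSR s hs) (hSR s' hs'),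
    fun i hi => ?_, hS ▸ hB, fun i hi hik => ?_⟩
  · simp only [List.get_eq_getElem, List.getElem_ofFn]
    refine B.gen_notMem_closure ?_
    rintro _ ⟨j, hj, hji, rfl⟩
    exact ⟨⟨j, by simpa using hj⟩, by simpa [Fin.ext_iff] using hji, by simp⟩
  · simp only [List.length_ofFn] at hi
    simp only [List.get_eq_getElem, List.getElem_ofFn, hi, dif_pos, B.pcomm_gen_Pk_iff]
    exact ⟨by simp, fun j hj hji => by simpa [Fin.ext_iff] using hji⟩
end
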